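/- Let I be a set and L ⊆ ℤ^(I) a lattice. Then: (a) the Graver basis of L is a Gröbner basis of L with respect to every term order on ℤ_{≥0}^(I) (hence a universal Gröbner basis); (b) if B ⊆ L is a Gröbner basis of L with respect to some term order, then B is a Markov basis of L; (c) every Markov basis of L is a generating set of L (L equals the subgroup generated by B). -/

import Mathlib

open Finsupp

/-- A permutation of `ℕ` that moves only finitely many points:
an element of the infinite symmetric group `Sym`. -/
def IsFinPerm (σ : Equiv.Perm ℕ) : Prop := {i | σ i ≠ i}.Finite

/-- Membership in `Sym(n)`: permutations of `ℕ` fixing every index `≥ n`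
(the indices `0, 1, …, n-1` play the role of `[n] = {1, …, n}`). -/
def InSymN (n : ℕ) (σ : Equiv.Perm ℕ) : Prop := ∀ i, n ≤ i → σ i = i

/-- `u ∈ ℤ_{≥0}^{(I)}`. -/
def FsNonneg {I : Type*} (u : I →₀ ℤ) : Prop := ∀ i, 0 ≤ u i

/-- The partial order `⊑`. -/
def Sqle {I : Type*} (u v : I →₀ ℤ) : Prop := ∀ i, 0 ≤ u i * v i ∧ |u i| ≤ |v i|

/-- The Graver basis of (the underlying set of) a lattice `L`:
the `⊑`-minimal elements of `L \ {0}`. -/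
def GraverBasis {I : Type*} (L : Set (I →₀ ℤ)) : Set (I →₀ ℤ) :=
  {u | u ∈ L ∧ u ≠ 0 ∧ ∀ v ∈ L, v ≠ 0 → Sqle v u → v = u}

/-- The `L`-fiber of `u`. -/
def latFiber {I : Type*} (L : Set (I →₀ ℤ)) (u : I →₀ ℤ) : Set (I →₀ ℤ) :=
  {v | FsNonneg v ∧ u - v ∈ L}

/-- `B` is a Markov basis of `L`: for each nonnegative `u` the graph on the fiber
`F_L(u)` with edges `v ~ w` whenever `v - w ∈ B ∪ (-B)` is connected. -/
def IsMarkovBasis {I : Type*} (L B : Set (I →₀ ℤ)) : Prop :=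
  ∀ u, FsNonneg u → ∀ v ∈ latFiber L u, ∀ w ∈ latFiber L u,
    Relation.ReflTransGen
      (fun x y => x ∈ latFiber L u ∧ y ∈ latFiber L u ∧ (x - y ∈ B ∨ y - x ∈ B)) v w

/-- A term order on `ℤ_{≥0}^{(I)}`: an additive well-order on the nonnegative elements. -/
structure TermOrderZ (I : Type*) where
  lt : (I →₀ ℤ) → (I →₀ ℤ) → Prop
  irrefl : ∀ u, FsNonneg u → ¬ lt u u
  trans : ∀ u v w, FsNonneg u → FsNonneg v → FsNonneg w → lt u v → lt v w → lt u w
  total : ∀ u v, FsNonneg u → FsNonneg v → u ≠ v → lt u v ∨ lt v u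
  min_exists : ∀ S : Set (I →₀ ℤ), (∀ u ∈ S, FsNonneg u) → S.Nonempty →
    ∃ m ∈ S, ∀ u ∈ S, u ≠ m → ¬ lt u m
  add_right : ∀ u v w, FsNonneg u → FsNonneg v → FsNonneg w → lt u v → lt (u + w) (v + w)

/-- There is a directed path (w.r.t. `lt`, with moves from `B ∪ (-B)`) inside the fiber
of `u` from `u` to the `lt`-minimal element of the fiber. -/
def GroebnerPath {I : Type*} (L : Set (I →₀ ℤ)) (lt : (I →₀ ℤ) → (I →₀ ℤ) → Prop)
    (B : Set (I →₀ ℤ)) (u : I →₀ ℤ) : Prop :=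
  ∃ (s : ℕ) (v : ℕ → (I →₀ ℤ)), v 0 = u ∧ (∀ t ≤ s, v t ∈ latFiber L u) ∧
    (∀ t < s, lt (v (t + 1)) (v t) ∧ (v t - v (t + 1) ∈ B ∨ v (t + 1) - v t ∈ B)) ∧
    (∀ w ∈ latFiber L u, w ≠ v s → lt (v s) w)

/-- `B` is a Gröbner basis of `L` with respect to the term order `lt`. -/
def IsGroebnerBasis {I : Type*} (L : Set (I →₀ ℤ))
    (lt : (I →₀ ℤ) → (I →₀ ℤ) → Prop) (B : Set (I →₀ ℤ)) : Prop :=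
  ∀ u, FsNonneg u → GroebnerPath L lt B u

/-- `H` is a Hilbert basis of the (set underlying a) monoid `M`:
a generating set of `M` contained in every generating set of `M`. -/
def IsHilbertBasis {N : Type*} [AddCommMonoid N] (M H : Set N) : Prop :=
  H ⊆ M ∧ (AddSubmonoid.closure H : Set N) = M ∧
    ∀ A ⊆ M, (AddSubmonoid.closure A : Set N) = M → H ⊆ A

/-- `u` is an irreducible element of `M`. -/
def IsIrredElem {N : Type*} [AddCommMonoid N] (M : Set N) (u : N) : Prop :=
  u ∈ M ∧ u ≠ 0 ∧ ∀ v ∈ M, ∀ w ∈ M, u = v + w → v = 0 ∨ w = 0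

/-- The action of a permutation of `ℕ` on `ℤ^{(ℕ^d × [c])}`:
`(σ·u)((σ i₁, …, σ i_d), j) = u((i₁, …, i_d), j)`. -/
noncomputable def permActd (d c : ℕ) (σ : Equiv.Perm ℕ) (u : (Fin d → ℕ) × Fin c →₀ ℤ) :
    (Fin d → ℕ) × Fin c →₀ ℤ :=
  Finsupp.equivMapDomain
    (Equiv.prodCongr ((Equiv.refl (Fin d)).arrowCongr σ) (Equiv.refl (Fin c))) u

/-- The action of a permutation of `ℕ` on `ℤ^{(ℕ × [c])}`: `(σ·u)(σ i, j) = u(i, j)`. -/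
noncomputable def permAct1 (c : ℕ) (σ : Equiv.Perm ℕ) (u : ℕ × Fin c →₀ ℤ) :
    ℕ × Fin c →₀ ℤ :=
  Finsupp.equivMapDomain (Equiv.prodCongr σ (Equiv.refl (Fin c))) u

/-- The action of a permutation of `ℕ` on `ℤ^{(ℕ)}`: `(σ·u)(σ i) = u i`. -/
noncomputable def permAct0 (σ : Equiv.Perm ℕ) (u : ℕ →₀ ℤ) : ℕ →₀ ℤ :=
  Finsupp.equivMapDomain σ u

/-- `Sym(B)` for `B ⊆ ℤ^{(ℕ^d × [c])}`. -/
def symOrbitd (d c : ℕ) (B : Set ((Fin d → ℕ) × Fin c →₀ ℤ)) :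
    Set ((Fin d → ℕ) × Fin c →₀ ℤ) :=
  {w | ∃ σ, IsFinPerm σ ∧ ∃ b ∈ B, w = permActd d c σ b}

/-- `Sym(n)(B)` for `B ⊆ ℤ^{(ℕ^d × [c])}`. -/
def symOrbitNd (d c n : ℕ) (B : Set ((Fin d → ℕ) × Fin c →₀ ℤ)) :
    Set ((Fin d → ℕ) × Fin c →₀ ℤ) :=
  {w | ∃ σ, InSymN n σ ∧ ∃ b ∈ B, w = permActd d c σ b}

/-- `Sym(B)` for `B ⊆ ℤ^{(ℕ × [c])}`. -/
def symOrbit1 (c : ℕ) (B : Set (ℕ × Fin c →₀ ℤ)) : Set (ℕ × Fin c →₀ ℤ) :=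
  {w | ∃ σ, IsFinPerm σ ∧ ∃ b ∈ B, w = permAct1 c σ b}

/-- `Sym(B)` for `B ⊆ ℤ^{(ℕ)}`. -/
def symOrbit0 (B : Set (ℕ →₀ ℤ)) : Set (ℕ →₀ ℤ) :=
  {w | ∃ σ, IsFinPerm σ ∧ ∃ b ∈ B, w = permAct0 σ b}

/-- `supp(u) ⊆ I_n = [n]^d × [c]`. -/
def SuppIn (d c n : ℕ) (u : (Fin d → ℕ) × Fin c →₀ ℤ) : Prop :=
  ∀ p : (Fin d → ℕ) × Fin c, u p ≠ 0 → ∀ k, p.1 k < n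

/-- `ℤ^{(I_n)}`, for `I_n = [n]^d × [c]`, as a subgroup of `ℤ^{(ℕ^d × [c])}`. -/
noncomputable def suppSubgroup (d c n : ℕ) : AddSubgroup ((Fin d → ℕ) × Fin c →₀ ℤ) where
  carrier := {u | SuppIn d c n u}
  zero_mem' := by intro p hp; simp at hp
  add_mem' := by
    intro a b ha hb p hp k
    by_cases h : a p = 0
    · refine hb p ?_ k
      intro hbp
      exact hp (by simp [h, hbp])
    · exact ha p h k
  neg_mem' := by
    intro a ha p hp k
    refine ha p ?_ k
    intro hap
    exact hp (by simp [hap])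

/-- The positive part `u⁺`. -/
noncomputable def fsPos {I : Type*} (u : I →₀ ℤ) : I →₀ ℤ :=
  u.mapRange (fun z => max z 0) (by simp)

/-- The negative part `u⁻`. -/
noncomputable def fsNeg {I : Type*} (u : I →₀ ℤ) : I →₀ ℤ :=
  u.mapRange (fun z => max (-z) 0) (by simp)


/-!
Every nonzero `z ∈ L` dominates, in the order `⊑`, a Graver element: a `⊑`-smaller nonzero
lattice vector of least `ℓ¹`-norm. If `v` lies in the fiber of `u` but is not its least element
`m`, a Graver element `g ⊑ v - m` can be taken off `v` and put on `m` keeping both nonnegative,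
and additivity of the term order forces `v - g ≺ v`; well-founded descent then reaches `m`.
A Gröbner basis joins every element of a fiber to the unique least one, so it is a Markov basis.
Finally `z = z⁺ - z⁻` with `z⁺`, `z⁻` in one fiber, so a Markov path from `z⁺` to `z⁻` writes
`z` as a signed sum of moves.
-/

section Sqle

variable {I : Type*}

lemma int_abs_lt_abs_of_mul_nonneg {a b : ℤ} (hab : 0 ≤ a * b) (habs : |a| ≤ |b|)
    (hne : a ≠ b) : |a| < |b| := by
  refine lt_of_le_of_ne habs fun heq => hne ?_
  rcases abs_eq_abs.mp heq with h | rfl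
  · exact h
  · have : b = 0 := by nlinarith
    simp [this]

lemma int_nonneg_sub_and_add_of_conformal {a v m : ℤ} (hv : 0 ≤ v) (hm : 0 ≤ m)
    (ha : 0 ≤ a * (v - m)) (habs : |a| ≤ |v - m|) : 0 ≤ v - a ∧ 0 ≤ m + a := by
  rcases abs_cases a with ⟨h₁, h₂⟩ | ⟨h₁, h₂⟩ <;>
    rcases abs_cases (v - m) with ⟨h₃, h₄⟩ | ⟨h₃, h₄⟩ <;> constructor <;> nlinarith

lemma Sqle.trans {u v w : I →₀ ℤ} (huv : Sqle u v) (hvw : Sqle v w) : Sqle u w := by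
  intro i
  obtain ⟨huv₁, huv₂⟩ := huv i
  obtain ⟨hvw₁, hvw₂⟩ := hvw i
  refine ⟨?_, huv₂.trans hvw₂⟩
  rcases eq_or_ne (v i) 0 with hv | hv
  · simp_all
  · nlinarith [mul_nonneg huv₁ hvw₁, mul_self_pos.mpr hv]

lemma Sqle.natAbs_sum_lt {u v : I →₀ ℤ} (huv : Sqle u v) (hne : u ≠ v) :
    (u.sum fun _ a => a.natAbs) < v.sum fun _ a => a.natAbs := by
  have hsupp : u.support ⊆ v.support := fun i hi => by
    simpa using (abs_pos.mpr (Finsupp.mem_support_iff.mp hi)).trans_le (huv i).2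
  obtain ⟨i, hi⟩ := Finsupp.ne_iff.mp hne
  rw [Finsupp.sum_of_support_subset u hsupp _ (fun _ _ => rfl)]
  have hi' : v i ≠ 0 := fun h => hi (by simpa [h] using (huv i).2)
  refine Finset.sum_lt_sum (fun j _ => ?_) ⟨i, Finsupp.mem_support_iff.mpr hi', ?_⟩
  · have := (huv j).2
    rwa [Int.abs_eq_natAbs, Int.abs_eq_natAbs, Nat.cast_le] at this
  · have := int_abs_lt_abs_of_mul_nonneg (huv i).1 (huv i).2 hi
    rwa [Int.abs_eq_natAbs, Int.abs_eq_natAbs, Nat.cast_lt] at this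

lemma exists_mem_graverBasis_sqle (L : AddSubgroup (I →₀ ℤ)) {z : I →₀ ℤ} (hz : z ∈ L)
    (hz₀ : z ≠ 0) : ∃ g ∈ GraverBasis (L : Set (I →₀ ℤ)), Sqle g z := by
  obtain ⟨g, ⟨hgL, hg₀, hgz⟩, hgmin⟩ := exists_minimalFor_of_wellFoundedLT
    (fun w => w ∈ L ∧ w ≠ 0 ∧ Sqle w z) (fun w => w.sum fun _ a => a.natAbs)
    ⟨z, hz, hz₀, fun i => ⟨mul_self_nonneg _, le_rfl⟩⟩
  refine ⟨g, ⟨hgL, hg₀, fun v hvL hv₀ hvg => ?_⟩, hgz⟩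
  by_contra hne
  have hlt := hvg.natAbs_sum_lt hne
  exact hlt.not_ge (hgmin ⟨hvL, hv₀, hvg.trans hgz⟩ hlt.le)

lemma fsNonneg_sub_and_add_of_sqle {g v m : I →₀ ℤ} (hv : FsNonneg v) (hm : FsNonneg m)
    (hg : Sqle g (v - m)) : FsNonneg (v - g) ∧ FsNonneg (m + g) := by
  have h i := int_nonneg_sub_and_add_of_conformal (hv i) (hm i) (hg i).1 (hg i).2
  exact ⟨fun i => (h i).1, fun i => (h i).2⟩

end Sqle

namespace TermOrderZ

variable {I : Type*} (ord : TermOrderZ I)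

lemma lt_asymm {u v : I →₀ ℤ} (hu : FsNonneg u) (hv : FsNonneg v) (huv : ord.lt u v) :
    ¬ ord.lt v u :=
  fun hvu => ord.irrefl u hu (ord.trans u v u hu hv hu huv hvu)

lemma add_lt_add {a b c d : I →₀ ℤ} (ha : FsNonneg a) (hb : FsNonneg b) (hc : FsNonneg c)
    (hd : FsNonneg d) (hab : ord.lt a b) (hcd : ord.lt c d) : ord.lt (a + c) (b + d) := by
  have hnn {x y : I →₀ ℤ} (hx : FsNonneg x) (hy : FsNonneg y) : FsNonneg (x + y) :=
    fun i => add_nonneg (hx i) (hy i)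
  have hcd' := ord.add_right c d b hc hd hb hcd
  rw [add_comm c, add_comm d] at hcd'
  exact ord.trans _ _ _ (hnn ha hc) (hnn hb hc) (hnn hb hd)
    (ord.add_right a b c ha hb hc hab) hcd'

lemma exists_forall_lt {S : Set (I →₀ ℤ)} (hS : ∀ u ∈ S, FsNonneg u) (hne : S.Nonempty) :
    ∃ m ∈ S, ∀ w ∈ S, w ≠ m → ord.lt m w := by
  obtain ⟨m, hm, hmin⟩ := ord.min_exists S hS hne
  exact ⟨m, hm, fun w hw hwm =>
    (ord.total m w (hS m hm) (hS w hw) (Ne.symm hwm)).resolve_right (hmin w hw hwm)⟩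

lemma eq_of_forall_lt {S : Set (I →₀ ℤ)} (hS : ∀ u ∈ S, FsNonneg u) {m m' : I →₀ ℤ}
    (hm : m ∈ S) (hm' : m' ∈ S) (hmin : ∀ w ∈ S, w ≠ m → ord.lt m w)
    (hmin' : ∀ w ∈ S, w ≠ m' → ord.lt m' w) : m = m' := by
  by_contra hne
  exact ord.lt_asymm (hS m hm) (hS m' hm') (hmin m' hm' (Ne.symm hne)) (hmin' m hm hne)

theorem induction {S : Set (I →₀ ℤ)} (hS : ∀ u ∈ S, FsNonneg u) {P : (I →₀ ℤ) → Prop}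
    (step : ∀ v ∈ S, (∀ w ∈ S, ord.lt w v → P w) → P v) : ∀ v ∈ S, P v := by
  by_contra! ⟨v, hv, hPv⟩
  obtain ⟨m, ⟨hm, hPm⟩, hmin⟩ :=
    ord.min_exists {w | w ∈ S ∧ ¬ P w} (fun w hw => hS w hw.1) ⟨v, hv, hPv⟩
  refine hPm (step m hm fun w hw hwm => by_contra fun hPw => ?_)
  exact hmin w ⟨hw, hPw⟩ (fun h => ord.irrefl m (hS m hm) (h ▸ hwm)) hwm

end TermOrderZ

namespace Relation.ReflTransGen

variable {α : Type*} {r : α → α → Prop}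

lemma exists_seq {a b : α} (h : ReflTransGen r a b) :
    ∃ (s : ℕ) (f : ℕ → α), f 0 = a ∧ (∀ t < s, r (f t) (f (t + 1))) ∧ f s = b := by
  induction h using head_induction_on with
  | refl => exact ⟨0, fun _ => b, rfl, fun _ h => absurd h (Nat.not_lt_zero _), rfl⟩
  | @head a c hac _ ih =>
    obtain ⟨s, f, hf₀, hstep, hfs⟩ := ih
    refine ⟨s + 1, fun t => Nat.casesOn t a f, rfl, ?_, hfs⟩
    rintro (_ | t) ht
    · simpa [hf₀] using hac
    · exact hstep t (by omega)

lemma of_seq {s : ℕ} {f : ℕ → α} (hstep : ∀ t < s, r (f t) (f (t + 1))) :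
    ReflTransGen r (f 0) (f s) := by
  induction s with
  | zero => exact .refl
  | succ s ih => exact (ih fun t ht => hstep t (by omega)).tail (hstep s (by omega))

lemma sub_mem_addSubgroupClosure {G : Type*} [AddGroup G] {B : Set G} {r : G → G → Prop}
    (hr : ∀ x y, r x y → x - y ∈ B ∨ y - x ∈ B) {a b : G} (h : ReflTransGen r a b) :
    a - b ∈ AddSubgroup.closure B := by
  induction h with
  | refl => simp
  | @tail x y _ hxy ih =>
    rw [← sub_add_sub_cancel a x y]
    refine add_mem ih ?_
    rcases hr x y hxy with h | h
    · exact AddSubgroup.subset_closure h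
    · simpa using neg_mem (AddSubgroup.subset_closure h)

end Relation.ReflTransGen

section Fiber

variable {I : Type*} (L : AddSubgroup (I →₀ ℤ))

lemma self_mem_latFiber {u : I →₀ ℤ} (hu : FsNonneg u) : u ∈ latFiber (L : Set (I →₀ ℤ)) u :=
  ⟨hu, by simp⟩

lemma sub_mem_of_mem_latFiber {u v w : I →₀ ℤ} (hv : v ∈ latFiber (L : Set (I →₀ ℤ)) u)
    (hw : w ∈ latFiber (L : Set (I →₀ ℤ)) u) : v - w ∈ L := by
  simpa using sub_mem hw.2 hv.2

lemma latFiber_eq_of_mem {u x : I →₀ ℤ} (hx : x ∈ latFiber (L : Set (I →₀ ℤ)) u) :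
    latFiber (L : Set (I →₀ ℤ)) x = latFiber (L : Set (I →₀ ℤ)) u := by
  ext y
  refine ⟨fun hy => ⟨hy.1, ?_⟩, fun hy => ⟨hy.1, sub_mem_of_mem_latFiber L hx hy⟩⟩
  simpa using add_mem hx.2 hy.2

lemma mem_latFiber_of_sub_mem {u v w : I →₀ ℤ} (hv : v ∈ latFiber (L : Set (I →₀ ℤ)) u)
    (hw : FsNonneg w) (hvw : v - w ∈ L) : w ∈ latFiber (L : Set (I →₀ ℤ)) u :=
  ⟨hw, by simpa using add_mem hv.2 hvw⟩

end Fiber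

section Bases

variable {I : Type*}

def IsDescentMove (L : Set (I →₀ ℤ)) (lt : (I →₀ ℤ) → (I →₀ ℤ) → Prop) (B : Set (I →₀ ℤ))
    (u x y : I →₀ ℤ) : Prop :=
  y ∈ latFiber L u ∧ lt y x ∧ (x - y ∈ B ∨ y - x ∈ B)

lemma groebnerPath_of_reflTransGen {L : Set (I →₀ ℤ)} {lt : (I →₀ ℤ) → (I →₀ ℤ) → Prop}
    {B : Set (I →₀ ℤ)} {u m : I →₀ ℤ} (hu : u ∈ latFiber L u)
    (hmin : ∀ w ∈ latFiber L u, w ≠ m → lt m w)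
    (h : Relation.ReflTransGen (IsDescentMove L lt B u) u m) : GroebnerPath L lt B u := by
  obtain ⟨s, f, hf₀, hstep, hfs⟩ := h.exists_seq
  refine ⟨s, f, hf₀, ?_, fun t ht => (hstep t ht).2, hfs ▸ hmin⟩
  rintro (_ | t) ht
  · exact hf₀ ▸ hu
  · exact (hstep t (by omega)).1

variable (L : AddSubgroup (I →₀ ℤ)) (ord : TermOrderZ I)

/-- Otherwise `m ≺ m + g` and `v ≺ v - g` would add up to `m + v ≺ m + v`. -/
lemma exists_graverBasis_sub_lt {u m v : I →₀ ℤ} (hm : m ∈ latFiber (L : Set (I →₀ ℤ)) u)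
    (hmin : ∀ w ∈ latFiber (L : Set (I →₀ ℤ)) u, w ≠ m → ord.lt m w)
    (hv : v ∈ latFiber (L : Set (I →₀ ℤ)) u) (hvm : v ≠ m) :
    ∃ g ∈ GraverBasis (L : Set (I →₀ ℤ)),
      v - g ∈ latFiber (L : Set (I →₀ ℤ)) u ∧ ord.lt (v - g) v := by
  obtain ⟨g, hgG, hg⟩ := exists_mem_graverBasis_sqle L (sub_mem_of_mem_latFiber L hv hm)
    (sub_ne_zero.mpr hvm)
  obtain ⟨hvg, hmg⟩ := fsNonneg_sub_and_add_of_sqle hv.1 hm.1 hg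
  have hgL : g ∈ L := hgG.1
  have hvgF : v - g ∈ latFiber (L : Set (I →₀ ℤ)) u :=
    mem_latFiber_of_sub_mem L hv hvg (by simpa using hgL)
  have hmgF : m + g ∈ latFiber (L : Set (I →₀ ℤ)) u :=
    mem_latFiber_of_sub_mem L hm hmg (by simpa using neg_mem hgL)
  refine ⟨g, hgG, hvgF, by_contra fun hnlt => ?_⟩
  have hm_lt : ord.lt m (m + g) := hmin _ hmgF (by simpa using hgG.2.1)
  have hv_lt : ord.lt v (v - g) :=
    (ord.total v (v - g) hv.1 hvg fun h => hgG.2.1 (by simpa using h.symm)).resolve_right hnlt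
  have hsum := ord.add_lt_add hm.1 hmg hv.1 hvg hm_lt hv_lt
  rw [show m + g + (v - g) = m + v by abel] at hsum
  exact ord.irrefl _ (fun i => add_nonneg (hm.1 i) (hv.1 i)) hsum

lemma reflTransGen_isDescentMove_graverBasis {u m : I →₀ ℤ}
    (hm : m ∈ latFiber (L : Set (I →₀ ℤ)) u)
    (hmin : ∀ w ∈ latFiber (L : Set (I →₀ ℤ)) u, w ≠ m → ord.lt m w) :
    ∀ v ∈ latFiber (L : Set (I →₀ ℤ)) u, Relation.ReflTransGen
      (IsDescentMove (L : Set (I →₀ ℤ)) ord.lt (GraverBasis (L : Set (I →₀ ℤ))) u) v m := by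
  refine ord.induction (fun _ h => h.1) fun v hv ih => ?_
  rcases eq_or_ne v m with rfl | hvm
  · exact .refl
  obtain ⟨g, hgG, hvgF, hlt⟩ := exists_graverBasis_sub_lt L ord hm hmin hv hvm
  exact .head ⟨hvgF, hlt, .inl (by simpa using hgG)⟩ (ih _ hvgF hlt)

theorem graverBasis_isGroebnerBasis :
    IsGroebnerBasis (L : Set (I →₀ ℤ)) ord.lt (GraverBasis (L : Set (I →₀ ℤ))) := by
  intro u hu
  have huF := self_mem_latFiber L hu
  obtain ⟨m, hm, hmin⟩ := ord.exists_forall_lt (fun _ h => h.1) ⟨u, huF⟩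
  exact groebnerPath_of_reflTransGen huF hmin
    (reflTransGen_isDescentMove_graverBasis L ord hm hmin u huF)

def IsFiberEdge (L B : Set (I →₀ ℤ)) (u x y : I →₀ ℤ) : Prop :=
  x ∈ latFiber L u ∧ y ∈ latFiber L u ∧ (x - y ∈ B ∨ y - x ∈ B)

instance (L B : Set (I →₀ ℤ)) (u : I →₀ ℤ) : Std.Symm (IsFiberEdge L B u) :=
  ⟨fun _ _ ⟨hx, hy, hxy⟩ => ⟨hy, hx, hxy.symm⟩⟩

lemma IsGroebnerBasis.exists_reflTransGen_isFiberEdge {B : Set (I →₀ ℤ)}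
    (hB : IsGroebnerBasis (L : Set (I →₀ ℤ)) ord.lt B) {u x : I →₀ ℤ}
    (hx : x ∈ latFiber (L : Set (I →₀ ℤ)) u) :
    ∃ m ∈ latFiber (L : Set (I →₀ ℤ)) u,
      (∀ w ∈ latFiber (L : Set (I →₀ ℤ)) u, w ≠ m → ord.lt m w) ∧
      Relation.ReflTransGen (IsFiberEdge (L : Set (I →₀ ℤ)) B u) x m := by
  obtain ⟨s, f, hf₀, hF, hstep, hmin⟩ := hB x hx.1
  rw [latFiber_eq_of_mem L hx] at hF hmin
  refine ⟨f s, hF s le_rfl, hmin, hf₀ ▸ Relation.ReflTransGen.of_seq fun t ht => ?_⟩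
  exact ⟨hF t ht.le, hF (t + 1) ht, (hstep t ht).2⟩

theorem IsGroebnerBasis.isMarkovBasis {B : Set (I →₀ ℤ)}
    (hB : IsGroebnerBasis (L : Set (I →₀ ℤ)) ord.lt B) :
    IsMarkovBasis (L : Set (I →₀ ℤ)) B := by
  intro u _ v hv w hw
  obtain ⟨m, hm, hmin, hvm⟩ := hB.exists_reflTransGen_isFiberEdge L ord hv
  obtain ⟨m', hm', hmin', hwm'⟩ := hB.exists_reflTransGen_isFiberEdge L ord hw
  obtain rfl := ord.eq_of_forall_lt (fun _ h => h.1) hm hm' hmin hmin'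
  exact hvm.trans (Std.Symm.symm _ _ hwm')

lemma fsNonneg_fsPos (z : I →₀ ℤ) : FsNonneg (fsPos z) := fun _ => le_max_right _ _

lemma fsNonneg_fsNeg (z : I →₀ ℤ) : FsNonneg (fsNeg z) := fun _ => le_max_right _ _

lemma fsPos_sub_fsNeg (z : I →₀ ℤ) : fsPos z - fsNeg z = z := by
  ext i
  simp only [fsPos, fsNeg, Finsupp.sub_apply, Finsupp.mapRange_apply]
  omega

theorem IsMarkovBasis.addSubgroupClosure_eq {B : Set (I →₀ ℤ)} (hBL : B ⊆ L)
    (hB : IsMarkovBasis (L : Set (I →₀ ℤ)) B) : AddSubgroup.closure B = L := by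
  refine le_antisymm ((AddSubgroup.closure_le L).mpr hBL) fun z hz => ?_
  have hpath := hB (fsPos z) (fsNonneg_fsPos z) _ (self_mem_latFiber L (fsNonneg_fsPos z))
    (fsNeg z) ⟨fsNonneg_fsNeg z, by rwa [fsPos_sub_fsNeg]⟩
  rw [← fsPos_sub_fsNeg z]
  exact hpath.sub_mem_addSubgroupClosure fun _ _ h => h.2.2

end Bases

/-- For any lattice `L ⊆ ℤ^{(I)}`: (a) the Graver basis of `L` is a
Gröbner basis with respect to every term order (hence a universal Gröbner basis);
(b) a Gröbner basis of `L` with respect to some term order is a Markov basis;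
(c) a Markov basis of `L` is a generating set of `L`. -/
theorem basis_implications {I : Type*} (L : AddSubgroup (I →₀ ℤ)) :
    (∀ ord : TermOrderZ I,
        IsGroebnerBasis (L : Set (I →₀ ℤ)) ord.lt (GraverBasis (L : Set (I →₀ ℤ)))) ∧
    (∀ B : Set (I →₀ ℤ), B ⊆ (L : Set (I →₀ ℤ)) →
        (∃ ord : TermOrderZ I, IsGroebnerBasis (L : Set (I →₀ ℤ)) ord.lt B) →
        IsMarkovBasis (L : Set (I →₀ ℤ)) B) ∧
    (∀ B : Set (I →₀ ℤ), B ⊆ (L : Set (I →₀ ℤ)) →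
        IsMarkovBasis (L : Set (I →₀ ℤ)) B → AddSubgroup.closure B = L) :=
  ⟨graverBasis_isGroebnerBasis L, fun _ _ ⟨ord, hB⟩ => hB.isMarkovBasis L ord,
    fun _ hBL hB => hB.addSubgroupClosure_eq L hBL⟩
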